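/- Let Z be a special symbol of defect 1 and size (m+1,m) and Z' a special symbol of defect 0 and size (m',m') with m' = m or m' = m+1, and suppose D_{Z,Z'} ≠ ∅. Let Ψ_0 and Ψ'_0 be the cores in Z_I and Z'_I of D_{Z,Z'}. Then: (i) if {c_k, d_l} is a consecutive pair contained in Ψ'_0, then for all Λ ∈ S̄_Z and Λ' ∈ S̄_{Z'}, (Λ,Λ') ∈ B̄⁺_{Z,Z'} if and only if (Λ, Λ' + Λ_{{c_k,d_l}}) ∈ B̄⁺_{Z,Z'}; (ii) if {a_k, b_l} is a consecutive pair contained in Ψ_0, then (Λ,Λ') ∈ B̄⁺_{Z,Z'} if and only if (Λ + Λ_{{a_k,b_l}}, Λ') ∈ B̄⁺_{Z,Z'}. -/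

import Mathlib

open scoped symmDiff

/-- A symbol: a pair of finsets of naturals (its two rows, each read in
strictly decreasing order). -/
abbrev Symb :=  Finset ℕ × Finset ℕ

/-- The strictly decreasing enumeration of a finset of naturals. -/
def rowList (s : Finset ℕ) : List ℕ := (s.sort (· ≤ ·)).reverse

/-- The `i`-th entry (0-based) of the strictly decreasing enumeration of `s`. -/
def ent (s : Finset ℕ) (i : ℕ) : Option ℕ := (rowList s)[i]?

/-- Impose a relation on two optional entries whenever both exist. -/
def oRel (r : ℕ → ℕ → Prop) : Option ℕ → Option ℕ → Prop
  | some x, some y => r x y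
  | _, _ => True

/-- `Z` is a special symbol of defect 1 and size `(m+1, m)`. -/
def IsSpecial1 (Z : Symb) (m : ℕ) : Prop :=
  Z.1.card = m + 1 ∧ Z.2.card = m ∧
  (∀ i, oRel (· ≥ ·) (ent Z.1 i) (ent Z.2 i)) ∧
  (∀ i, oRel (· ≥ ·) (ent Z.2 i) (ent Z.1 (i + 1)))

/-- `Z'` is a special symbol of defect 0 and size `(m', m')`. -/
def IsSpecial0 (Z : Symb) (m' : ℕ) : Prop :=
  Z.1.card = m' ∧ Z.2.card = m' ∧
  (∀ i, oRel (· ≥ ·) (ent Z.1 i) (ent Z.2 i)) ∧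
  (∀ i, oRel (· ≥ ·) (ent Z.2 i) (ent Z.1 (i + 1)))

/-- `Z_I`: the entries of `Z` lying in exactly one row (row remembered). -/
def ZI (Z : Symb) : Symb := (Z.1 \ Z.2, Z.2 \ Z.1)

/-- `M` is a subset of `Z_I`. -/
def SubZI (M Z : Symb) : Prop := M.1 ⊆ Z.1 \ Z.2 ∧ M.2 ⊆ Z.2 \ Z.1

/-- `Z` is regular: no degenerate entries. -/
def Regular (Z : Symb) : Prop := Disjoint Z.1 Z.2

/-- `Λ_M`: exchange the rows of the entries of `M`. -/
def lam (Z M : Symb) : Symb := ((Z.1 \ M.1) ∪ M.2, (Z.2 \ M.2) ∪ M.1)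

/-- `S̄_Z = {Λ_M : M ⊆ Z_I}`. -/
def Sbar (Z : Symb) : Set Symb := {Λ | ∃ M, SubZI M Z ∧ Λ = lam Z M}

/-- Size and inequality conditions of `B̄⁺_{Z,Z'}` in the case `m' = m`. -/
def Bm (Λ Λ' : Symb) : Prop :=
  Λ'.1.card = Λ.2.card ∧ Λ'.2.card + 1 = Λ.1.card ∧
  (∀ i, oRel (· > ·) (ent Λ.1 i) (ent Λ'.2 i)) ∧
  (∀ i, oRel (· ≥ ·) (ent Λ'.2 i) (ent Λ.1 (i + 1))) ∧
  (∀ i, oRel (· > ·) (ent Λ.2 i) (ent Λ'.1 (i + 1))) ∧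
  (∀ i, oRel (· ≥ ·) (ent Λ'.1 i) (ent Λ.2 i))

/-- Size and inequality conditions of `B̄⁺_{Z,Z'}` in the case `m' = m + 1`. -/
def Bm1 (Λ Λ' : Symb) : Prop :=
  Λ'.1.card = Λ.2.card + 1 ∧ Λ'.2.card = Λ.1.card ∧
  (∀ i, oRel (· ≥ ·) (ent Λ.1 i) (ent Λ'.2 i)) ∧
  (∀ i, oRel (· > ·) (ent Λ'.2 i) (ent Λ.1 (i + 1))) ∧
  (∀ i, oRel (· ≥ ·) (ent Λ.2 i) (ent Λ'.1 (i + 1))) ∧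
  (∀ i, oRel (· > ·) (ent Λ'.1 i) (ent Λ.2 i))

/-- The relation `B̄⁺_{Z,Z'}`. -/
def BbarPlus (Z Z' : Symb) (m m' : ℕ) (Λ Λ' : Symb) : Prop :=
  Λ ∈ Sbar Z ∧ Λ' ∈ Sbar Z' ∧
  ((m' = m ∧ Bm Λ Λ') ∨ (m' = m + 1 ∧ Bm1 Λ Λ'))

/-- The relation `D_{Z,Z'}`. -/
def DRel (Z Z' : Symb) (m m' : ℕ) (A A' : Symb) : Prop :=
  BbarPlus Z Z' m m' A A' ∧
  A.1.card = m + 1 ∧ A.2.card = m ∧ A'.1.card = m' ∧ A'.2.card = m'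

/-- `{c, d}` is a consecutive pair in `Z_I`. -/
def ConsecPair (Z : Symb) (c d : ℕ) : Prop :=
  c ∈ Z.1 \ Z.2 ∧ d ∈ Z.2 \ Z.1 ∧
  ∀ x ∈ (Z.1 \ Z.2) ∪ (Z.2 \ Z.1), ¬(min c d < x ∧ x < max c d)

/-! Write `cnt s v` for the number of entries of the row `s` that are `≥ v`. Every interlacing
condition in `Bm` (and the specialness of `Z`, `Z'`) is equivalent to a pointwise inequality
between such counting functions, so `B̄⁺` becomes a system of linear inequalities indexed by `v`.

Exchanging the rows of two entries `x < y` changes the counting functions of both rows by `±1`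
exactly on `(x, y]`. The hypothesis that the swapped special symbol is still related to the other
special symbol makes the inequalities tight on `(x, y]`: neither symbol then has entries strictly
between `x` and `y`, and the other symbol has none in `(x, y]` (if the swapped symbol is the
second argument of `Bm`) or in `[x, y)` (if it is the first). Under these gaps a related pair must
have `x` and `y` in different rows (otherwise a counting function drops by `2` across the window
where the inequalities allow only `1`), and swapping them preserves every inequality, the needed
slack being read off at the two ends of the window. -/

def cnt (s : Finset ℕ) (v : ℕ) : ℕ := (s.filter (v ≤ ·)).card

lemma rowList_pairwise (s : Finset ℕ) : (rowList s).Pairwise (· > ·) := by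
  rw [rowList, List.pairwise_reverse]
  exact (Finset.sortedLT_sort s).pairwise

lemma rowList_nodup (s : Finset ℕ) : (rowList s).Nodup :=
  List.nodup_reverse.mpr (Finset.sort_nodup _ _)

lemma length_rowList (s : Finset ℕ) : (rowList s).length = s.card := by
  simp [rowList]

lemma cnt_eq_length_filter (s : Finset ℕ) (v : ℕ) :
    cnt s v = ((rowList s).filter (v ≤ ·)).length := by
  rw [← List.toFinset_card_of_nodup ((rowList_nodup s).filter _), List.toFinset_filter]
  simp [rowList, cnt]

lemma List.Pairwise.lt_length_filter_le_iff {l : List ℕ} (hl : l.Pairwise (· > ·))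
    {i x v : ℕ} (h : l[i]? = some x) : i < (l.filter (v ≤ ·)).length ↔ v ≤ x := by
  induction l generalizing i with
  | nil => simp at h
  | cons a t ih =>
    obtain ⟨ha, ht⟩ := List.pairwise_cons.mp hl
    by_cases hv : v ≤ a
    · cases i with
      | zero => simp_all
      | succ i => simpa [List.filter_cons, hv] using ih ht (by simpa using h)
    · have hx : x ≤ a := by
        cases i with
        | zero => simp_all
        | succ i => exact (ha x (List.mem_of_getElem? (by simpa using h))).le
      have : (t.filter (v ≤ ·)) = [] :=
        List.filter_eq_nil_iff.mpr fun z hz => by have := ha z hz; simp; omega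
      simp [hv, this]
      omega

lemma lt_cnt_iff_of_ent {s : Finset ℕ} {i x : ℕ} (h : ent s i = some x) (v : ℕ) :
    i < cnt s v ↔ v ≤ x := by
  rw [cnt_eq_length_filter]
  exact (rowList_pairwise s).lt_length_filter_le_iff h

lemma cnt_le_card (s : Finset ℕ) (v : ℕ) : cnt s v ≤ s.card := Finset.card_filter_le _ _

lemma exists_ent_eq {s : Finset ℕ} {i : ℕ} (h : i < s.card) : ∃ x, ent s i = some x :=
  ⟨(rowList s)[i]'(by rwa [length_rowList]), List.getElem?_eq_getElem _⟩

lemma forall_oRel_ent_iff {s t : Finset ℕ} {r : ℕ → ℕ → Prop} {k j : ℕ}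
    (hr : ∀ a b, r a b ↔ b + k ≤ a) (hcard : t.card ≤ s.card + j) :
    (∀ i, oRel r (ent s i) (ent t (i + j))) ↔ ∀ v, cnt t v ≤ cnt s (v + k) + j := by
  constructor
  · intro h v
    by_contra! hlt
    have hpos : j < cnt t v := by omega
    obtain ⟨y, hy⟩ := exists_ent_eq (s := t) (i := cnt t v - 1)
      (by have := cnt_le_card t v; omega)
    obtain ⟨x, hx⟩ := exists_ent_eq (s := s) (i := cnt t v - 1 - j)
      (by have := cnt_le_card t v; omega)
    have hvy : v ≤ y := (lt_cnt_iff_of_ent hy v).mp (by omega)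
    have hyx : y + k ≤ x := by
      have := h (cnt t v - 1 - j)
      rwa [hx, show cnt t v - 1 - j + j = cnt t v - 1 by omega, hy, oRel, hr] at this
    have := (lt_cnt_iff_of_ent hx (v + k)).mpr (by omega)
    omega
  · intro h i
    cases hx : ent s i with
    | none => trivial
    | some x =>
      cases hy : ent t (i + j) with
      | none => trivial
      | some y =>
        rw [oRel, hr, ← lt_cnt_iff_of_ent hx]
        have := (lt_cnt_iff_of_ent hy y).mpr le_rfl
        have := h y
        omega

-- `Weave 1 s t` is the counting form of `s₁ > t₁ ≥ s₂ > t₂ ≥ ⋯` and `Weave 0 s t` that of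
-- `t₁ ≥ s₁ > t₂ ≥ s₂ > ⋯` (rows listed decreasingly).
def Weave (k : ℕ) (s t : Finset ℕ) : Prop :=
  ∀ v, cnt s v ≤ cnt t v + k ∧ cnt t v + k ≤ cnt s (v + 1) + 1

lemma bm_iff_weave {Λ Λ' : Symb} : Bm Λ Λ' ↔
    Λ'.1.card = Λ.2.card ∧ Λ'.2.card + 1 = Λ.1.card ∧ Weave 1 Λ.1 Λ'.2 ∧ Weave 0 Λ.2 Λ'.1 := by
  refine and_congr_right fun h1 => and_congr_right fun h2 => ?_
  have e1 : (∀ i, oRel (· > ·) (ent Λ.1 i) (ent Λ'.2 i)) ↔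
      ∀ v, cnt Λ'.2 v ≤ cnt Λ.1 (v + 1) :=
    forall_oRel_ent_iff (k := 1) (j := 0) (fun _ _ => Iff.rfl) (by omega)
  have e2 : (∀ i, oRel (· ≥ ·) (ent Λ'.2 i) (ent Λ.1 (i + 1))) ↔
      ∀ v, cnt Λ.1 v ≤ cnt Λ'.2 v + 1 :=
    forall_oRel_ent_iff (k := 0) (j := 1) (fun _ _ => Iff.rfl) (by omega)
  have e3 : (∀ i, oRel (· > ·) (ent Λ.2 i) (ent Λ'.1 (i + 1))) ↔
      ∀ v, cnt Λ'.1 v ≤ cnt Λ.2 (v + 1) + 1 :=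
    forall_oRel_ent_iff (k := 1) (j := 1) (fun _ _ => Iff.rfl) (by omega)
  have e4 : (∀ i, oRel (· ≥ ·) (ent Λ'.1 i) (ent Λ.2 i)) ↔ ∀ v, cnt Λ.2 v ≤ cnt Λ'.1 v :=
    forall_oRel_ent_iff (k := 0) (j := 0) (fun _ _ => Iff.rfl) (by omega)
  rw [e1, e2, e3, e4, Weave, Weave, ← forall_and, ← forall_and, ← forall_and, ← forall_and]
  exact forall_congr' fun v => by omega

lemma bm1_iff_bm {Λ Λ' : Symb} : Bm1 Λ Λ' ↔ Bm Λ' Λ := by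
  unfold Bm1 Bm
  tauto

-- The counting form of `a₁ ≥ b₁ ≥ a₂ ≥ b₂ ≥ ⋯`.
def Interlaced (Z : Symb) : Prop := ∀ v, cnt Z.2 v ≤ cnt Z.1 v ∧ cnt Z.1 v ≤ cnt Z.2 v + 1

lemma interlaced_of_ent {Z : Symb} (hcard : Z.2.card ≤ Z.1.card)
    (hcard' : Z.1.card ≤ Z.2.card + 1)
    (h1 : ∀ i, oRel (· ≥ ·) (ent Z.1 i) (ent Z.2 i))
    (h2 : ∀ i, oRel (· ≥ ·) (ent Z.2 i) (ent Z.1 (i + 1))) : Interlaced Z := fun v =>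
  ⟨(forall_oRel_ent_iff (k := 0) (j := 0) (fun _ _ => Iff.rfl) (by omega)).mp h1 v,
    (forall_oRel_ent_iff (k := 0) (j := 1) (fun _ _ => Iff.rfl) hcard').mp h2 v⟩

lemma IsSpecial1.interlaced {Z : Symb} {m : ℕ} (h : IsSpecial1 Z m) : Interlaced Z := by
  obtain ⟨h1, h2, h3, h4⟩ := h
  exact interlaced_of_ent (by omega) (by omega) h3 h4

lemma IsSpecial0.interlaced {Z : Symb} {m : ℕ} (h : IsSpecial0 Z m) : Interlaced Z := by
  obtain ⟨h1, h2, h3, h4⟩ := h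
  exact interlaced_of_ent (by omega) (by omega) h3 h4

lemma cnt_zero (s : Finset ℕ) : cnt s 0 = s.card := by
  simp [cnt]

lemma cnt_insert {s : Finset ℕ} {a : ℕ} (ha : a ∉ s) (v : ℕ) :
    cnt (insert a s) v = cnt s v + if v ≤ a then 1 else 0 := by
  unfold cnt
  rw [Finset.filter_insert]
  split_ifs
  · exact Finset.card_insert_of_notMem (by simp [ha])
  · rfl

lemma cnt_eq_cnt_succ_add (s : Finset ℕ) (v : ℕ) :
    cnt s v = cnt s (v + 1) + if v ∈ s then 1 else 0 := by
  have : s.filter (v ≤ ·) = (s.filter (v + 1 ≤ ·)) ∪ (s.filter (· = v)) := by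
    ext z; by_cases z ∈ s <;> simp [*]; omega
  rw [cnt, cnt, this,
    Finset.card_union_of_disjoint (Finset.disjoint_filter.mpr fun _ _ _ => by omega),
    Finset.filter_eq']
  split_ifs <;> rfl

lemma cnt_eq_of_gap {s : Finset ℕ} {v w : ℕ} (hvw : v ≤ w) (h : ∀ z ∈ s, z < v ∨ w ≤ z) :
    cnt s v = cnt s w := by
  unfold cnt
  congr 1
  refine Finset.filter_congr fun z hz => ?_
  have := h z hz
  omega

lemma cnt_symmDiff_pair {s : Finset ℕ} {x y : ℕ} (hx : x ∈ s) (hy : y ∉ s) (v : ℕ) :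
    cnt (s ∆ {x, y}) v + (if v ≤ x then 1 else 0) = cnt s v + if v ≤ y then 1 else 0 := by
  have hxy : x ≠ y := fun h => hy (h ▸ hx)
  have : s ∆ {x, y} = insert y (s.erase x) := by
    ext z
    simp only [Finset.mem_symmDiff, Finset.mem_insert, Finset.mem_singleton, Finset.mem_erase]
    by_cases z = x <;> by_cases z = y <;> simp_all
  rw [this, cnt_insert (by simp [hy]), ← Finset.insert_erase hx, cnt_insert (by simp),
    Finset.insert_erase hx]
  ring

lemma cnt_symmDiff_pair' {s : Finset ℕ} {x y : ℕ} (hy : y ∈ s) (hx : x ∉ s) (v : ℕ) :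
    cnt (s ∆ {x, y}) v + (if v ≤ y then 1 else 0) = cnt s v + if v ≤ x then 1 else 0 := by
  rw [Finset.pair_comm]
  exact cnt_symmDiff_pair hy hx v

lemma cnt_eq_cnt_succ_add_one {s : Finset ℕ} {v : ℕ} (h : v ∈ s) :
    cnt s v = cnt s (v + 1) + 1 := by
  simpa [h] using cnt_eq_cnt_succ_add s v

lemma cnt_succ_le (s : Finset ℕ) (v : ℕ) : cnt s (v + 1) ≤ cnt s v := by
  have := cnt_eq_cnt_succ_add s v
  omega

lemma card_symmDiff_pair {s : Finset ℕ} {x y : ℕ} (h : x ∈ s ↔ y ∉ s) :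
    (s ∆ {x, y}).card = s.card := by
  rw [← cnt_zero, ← cnt_zero]
  by_cases hx : x ∈ s
  · simpa using cnt_symmDiff_pair hx (h.mp hx) 0
  · simpa using cnt_symmDiff_pair' (not_not.mp (mt h.mpr hx)) hx 0

section Weave

variable {k x y : ℕ} {s t : Finset ℕ}

lemma Weave.symmDiff_pair_right (hxy : x < y) (hs : ∀ z ∈ s, z ≤ x ∨ y < z)
    (ht : ∀ z ∈ t, z ≤ x ∨ y ≤ z) (hxt : x ∈ t ↔ y ∉ t) (h : Weave k s t) :
    Weave k s (t ∆ {x, y}) := by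
  intro v
  have hsv : ∀ w, x < w → w ≤ y + 1 → cnt s w = cnt s (y + 1) := fun w h1 h2 =>
    cnt_eq_of_gap h2 fun z hz => by have := hs z hz; omega
  have htv : ∀ w, x < w → w ≤ y → cnt t (x + 1) = cnt t w := fun w h1 h2 =>
    cnt_eq_of_gap h1 fun z hz => by have := ht z hz; omega
  have := hsv v; have := hsv (v + 1); have := hsv (x + 1)
  have := htv v; have := htv y
  have := h v; have := h x; have := h (y + 1)
  by_cases hx : x ∈ t
  · have := cnt_symmDiff_pair hx (hxt.mp hx) v
    have := cnt_eq_cnt_succ_add_one hx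
    split_ifs at * <;> omega
  · have hy : y ∈ t := by tauto
    have := cnt_symmDiff_pair' hy hx v
    have := cnt_eq_cnt_succ_add_one hy
    split_ifs at * <;> omega

lemma not_weave_of_mem_right (hxy : x < y) (hs : ∀ z ∈ s, z ≤ x ∨ y < z)
    (ht : ∀ z ∈ t, z ≤ x ∨ y ≤ z) (hx : x ∈ t) (hy : y ∈ t) : ¬ Weave k s t := by
  intro h
  have := cnt_eq_of_gap (s := s) (show x + 1 ≤ y + 1 by omega) fun z hz => by
    have := hs z hz; omega
  have := cnt_eq_of_gap (s := t) (show x + 1 ≤ y by omega) fun z hz => by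
    have := ht z hz; omega
  have := cnt_eq_cnt_succ_add_one hx; have := cnt_eq_cnt_succ_add_one hy
  have := h x; have := h (y + 1)
  omega

lemma Weave.symmDiff_pair_left (hxy : x < y) (hs : ∀ z ∈ s, z ≤ x ∨ y ≤ z)
    (ht : ∀ z ∈ t, z < x ∨ y ≤ z) (hxs : x ∈ s ↔ y ∉ s) (h : Weave k s t) :
    Weave k (s ∆ {x, y}) t := by
  intro v
  have hsv : ∀ w, x < w → w ≤ y → cnt s (x + 1) = cnt s w := fun w h1 h2 =>
    cnt_eq_of_gap h1 fun z hz => by have := hs z hz; omega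
  have htv : ∀ w, x ≤ w → w ≤ y → cnt t w = cnt t y := fun w h1 h2 =>
    cnt_eq_of_gap h2 fun z hz => by have := ht z hz; omega
  have := hsv v; have := hsv (v + 1); have := hsv y
  have := htv v; have := htv x
  have := h v; have := h x; have := h y
  by_cases hx : x ∈ s
  · have := cnt_symmDiff_pair hx (hxs.mp hx) v
    have := cnt_symmDiff_pair hx (hxs.mp hx) (v + 1)
    have := cnt_eq_cnt_succ_add_one hx
    split_ifs at * <;> omega
  · have hy : y ∈ s := by tauto
    have := cnt_symmDiff_pair' hy hx v
    have := cnt_symmDiff_pair' hy hx (v + 1)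
    have := cnt_eq_cnt_succ_add_one hy
    split_ifs at * <;> omega

lemma not_weave_of_mem_left (hxy : x < y) (hs : ∀ z ∈ s, z ≤ x ∨ y ≤ z)
    (ht : ∀ z ∈ t, z < x ∨ y ≤ z) (hx : x ∈ s) (hy : y ∈ s) : ¬ Weave k s t := by
  intro h
  have := cnt_eq_of_gap (s := s) (show x + 1 ≤ y by omega) fun z hz => by
    have := hs z hz; omega
  have := cnt_eq_of_gap (s := t) (show x ≤ y by omega) fun z hz => by
    have := ht z hz; omega
  have := cnt_eq_cnt_succ_add_one hx; have := cnt_eq_cnt_succ_add_one hy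
  have := h x; have := h y
  omega

end Weave

def swapPair (Λ : Symb) (x y : ℕ) : Symb := (Λ.1 ∆ {x, y}, Λ.2 ∆ {x, y})

lemma swapPair_swapPair (Λ : Symb) (x y : ℕ) : swapPair (swapPair Λ x y) x y = Λ := by
  simp [swapPair, symmDiff_symmDiff_cancel_right]

lemma swapPair_comm (Λ : Symb) (x y : ℕ) : swapPair Λ x y = swapPair Λ y x := by
  simp [swapPair, Finset.pair_comm]

lemma swapPair_fst_symmDiff_snd (Λ : Symb) (x y : ℕ) :
    (swapPair Λ x y).1 ∆ (swapPair Λ x y).2 = Λ.1 ∆ Λ.2 := by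
  simp [swapPair, symmDiff_symmDiff_symmDiff_comm]

lemma swapPair_fst_union_snd {Λ : Symb} {x y : ℕ} (hx : x ∈ Λ.1 ∆ Λ.2) (hy : y ∈ Λ.1 ∆ Λ.2) :
    (swapPair Λ x y).1 ∪ (swapPair Λ x y).2 = Λ.1 ∪ Λ.2 := by
  ext z
  simp only [swapPair, Finset.mem_union, Finset.mem_symmDiff, Finset.mem_insert,
    Finset.mem_singleton] at hx hy ⊢
  by_cases z = x <;> by_cases z = y <;> simp_all <;> tauto

def SplitsPair (Λ : Symb) (x y : ℕ) : Prop :=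
  x ∈ Λ.1 \ Λ.2 ∧ y ∈ Λ.2 \ Λ.1 ∨ x ∈ Λ.2 \ Λ.1 ∧ y ∈ Λ.1 \ Λ.2

lemma SplitsPair.symm {Q : Symb} {x y : ℕ} (h : SplitsPair Q x y) : SplitsPair Q y x := by
  unfold SplitsPair at *
  tauto

lemma SplitsPair.fst_mem {Q : Symb} {x y : ℕ} (h : SplitsPair Q x y) : x ∈ Q.1 ∆ Q.2 := by
  rw [Finset.mem_symmDiff]
  simp only [SplitsPair, Finset.mem_sdiff] at h
  tauto

section Swap

variable {Λ Λ' : Symb} {x y : ℕ}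

lemma Bm.swapPair_snd (hxy : x < y) (hΛ : ∀ z ∈ Λ.1 ∪ Λ.2, z ≤ x ∨ y < z)
    (hΛ' : ∀ z ∈ Λ'.1 ∪ Λ'.2, z ≤ x ∨ y ≤ z) (hx : x ∈ Λ'.1 ∆ Λ'.2) (hy : y ∈ Λ'.1 ∆ Λ'.2)
    (h : Bm Λ Λ') : Bm Λ (swapPair Λ' x y) := by
  rw [bm_iff_weave] at h ⊢
  obtain ⟨hcard1, hcard2, h1, h0⟩ := h
  have gap1 := fun z hz => hΛ z (Finset.mem_union_left Λ.2 hz)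
  have gap2 := fun z hz => hΛ z (Finset.mem_union_right Λ.1 hz)
  have gap1' := fun z hz => hΛ' z (Finset.mem_union_left Λ'.2 hz)
  have gap2' := fun z hz => hΛ' z (Finset.mem_union_right Λ'.1 hz)
  rw [Finset.mem_symmDiff] at hx hy
  have hsplit1 : x ∈ Λ'.1 ↔ y ∉ Λ'.1 := by
    refine ⟨fun hx1 hy1 => not_weave_of_mem_right hxy gap2 gap1' hx1 hy1 h0, fun hy1 => ?_⟩
    by_contra hx1
    exact not_weave_of_mem_right hxy gap1 gap2' (by tauto) (by tauto) h1
  have hsplit2 : x ∈ Λ'.2 ↔ y ∉ Λ'.2 := by tauto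
  refine ⟨?_, ?_, h1.symmDiff_pair_right hxy gap1 gap2' hsplit2,
    h0.symmDiff_pair_right hxy gap2 gap1' hsplit1⟩
  · simpa only [swapPair, card_symmDiff_pair hsplit1] using hcard1
  · simpa only [swapPair, card_symmDiff_pair hsplit2] using hcard2

lemma Bm.swapPair_fst (hxy : x < y) (hΛ : ∀ z ∈ Λ.1 ∪ Λ.2, z ≤ x ∨ y ≤ z)
    (hΛ' : ∀ z ∈ Λ'.1 ∪ Λ'.2, z < x ∨ y ≤ z) (hx : x ∈ Λ.1 ∆ Λ.2) (hy : y ∈ Λ.1 ∆ Λ.2)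
    (h : Bm Λ Λ') : Bm (swapPair Λ x y) Λ' := by
  rw [bm_iff_weave] at h ⊢
  obtain ⟨hcard1, hcard2, h1, h0⟩ := h
  have gap1 := fun z hz => hΛ z (Finset.mem_union_left Λ.2 hz)
  have gap2 := fun z hz => hΛ z (Finset.mem_union_right Λ.1 hz)
  have gap1' := fun z hz => hΛ' z (Finset.mem_union_left Λ'.2 hz)
  have gap2' := fun z hz => hΛ' z (Finset.mem_union_right Λ'.1 hz)
  rw [Finset.mem_symmDiff] at hx hy
  have hsplit1 : x ∈ Λ.1 ↔ y ∉ Λ.1 := by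
    refine ⟨fun hx1 hy1 => not_weave_of_mem_left hxy gap1 gap2' hx1 hy1 h1, fun hy1 => ?_⟩
    by_contra hx1
    exact not_weave_of_mem_left hxy gap2 gap1' (by tauto) (by tauto) h0
  have hsplit2 : x ∈ Λ.2 ↔ y ∉ Λ.2 := by tauto
  refine ⟨?_, ?_, h1.symmDiff_pair_left hxy gap1 gap2' hsplit1,
    h0.symmDiff_pair_left hxy gap2 gap1' hsplit2⟩
  · simpa only [swapPair, card_symmDiff_pair hsplit2] using hcard1
  · simpa only [swapPair, card_symmDiff_pair hsplit1] using hcard2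

end Swap

lemma gap_of_bm_swapPair_snd {P Q : Symb} {x y : ℕ} (hP : Interlaced P) (hQ : Interlaced Q)
    (hQxy : SplitsPair Q x y) (h : Bm P (swapPair Q x y)) :
    (∀ z ∈ P.1 ∪ P.2, z ≤ x ∨ y < z) ∧ (∀ z ∈ Q.1 ∪ Q.2, z ≤ x ∨ y ≤ z) := by
  rw [bm_iff_weave] at h
  obtain ⟨-, -, h1, h0⟩ := h
  dsimp only [swapPair] at h1 h0
  simp only [SplitsPair, Finset.mem_sdiff] at hQxy
  have key : ∀ v, x < v → v ≤ y → cnt P.1 (v + 1) = cnt P.1 v ∧ cnt P.2 (v + 1) = cnt P.2 v ∧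
      cnt Q.1 v = cnt P.1 v ∧ cnt Q.2 v = cnt P.2 v := by
    intro v hv1 hv2
    have := h1 v; have := h0 v; have := hP v; have := hP (v + 1); have := hQ v
    have := cnt_succ_le P.1 v; have := cnt_succ_le P.2 v
    rcases hQxy with ⟨⟨hx1, hx2⟩, hy2, hy1⟩ | ⟨⟨hx2, hx1⟩, hy1, hy2⟩
    · have := cnt_symmDiff_pair hx1 hy1 v
      have := cnt_symmDiff_pair' hy2 hx2 v
      split_ifs at * <;> omega
    · have := cnt_symmDiff_pair' hy1 hx1 v
      have := cnt_symmDiff_pair hx2 hy2 v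
      split_ifs at * <;> omega
  constructor
  · intro z hz
    by_contra! hz'
    have := key z (by omega) (by omega)
    rcases Finset.mem_union.mp hz with hz | hz <;>
    · have := cnt_eq_cnt_succ_add_one hz
      omega
  · intro z hz
    by_contra! hz'
    have := key z (by omega) (by omega)
    have := key (z + 1) (by omega) (by omega)
    rcases Finset.mem_union.mp hz with hz | hz <;>
    · have := cnt_eq_cnt_succ_add_one hz
      omega

lemma gap_of_bm_swapPair_fst {P Q : Symb} {x y : ℕ} (hP : Interlaced P) (hQ : Interlaced Q)
    (hQxy : SplitsPair Q x y) (h : Bm (swapPair Q x y) P) :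
    (∀ z ∈ P.1 ∪ P.2, z < x ∨ y ≤ z) ∧ (∀ z ∈ Q.1 ∪ Q.2, z ≤ x ∨ y ≤ z) := by
  rw [bm_iff_weave] at h
  obtain ⟨-, -, h1, h0⟩ := h
  dsimp only [swapPair] at h1 h0
  simp only [SplitsPair, Finset.mem_sdiff] at hQxy
  have key : ∀ v, x ≤ v → v < y → cnt P.1 (v + 1) = cnt P.1 v ∧ cnt P.2 (v + 1) = cnt P.2 v ∧
      (x < v → cnt Q.1 (v + 1) = cnt Q.1 v ∧ cnt Q.2 (v + 1) = cnt Q.2 v) := by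
    intro v hv1 hv2
    have := h1 v; have := h0 v; have := h1 (v + 1); have := h0 (v + 1)
    have := hP v; have := hP (v + 1); have := hQ v; have := hQ (v + 1)
    have := cnt_succ_le P.1 v; have := cnt_succ_le P.2 v
    have := cnt_succ_le Q.1 v; have := cnt_succ_le Q.2 v
    rcases hQxy with ⟨⟨hx1, hx2⟩, hy2, hy1⟩ | ⟨⟨hx2, hx1⟩, hy1, hy2⟩
    · have := cnt_symmDiff_pair hx1 hy1 v
      have := cnt_symmDiff_pair' hy2 hx2 v
      have := cnt_symmDiff_pair hx1 hy1 (v + 1)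
      have := cnt_symmDiff_pair' hy2 hx2 (v + 1)
      split_ifs at * <;> omega
    · have := cnt_symmDiff_pair' hy1 hx1 v
      have := cnt_symmDiff_pair hx2 hy2 v
      have := cnt_symmDiff_pair' hy1 hx1 (v + 1)
      have := cnt_symmDiff_pair hx2 hy2 (v + 1)
      split_ifs at * <;> omega
  constructor
  · intro z hz
    by_contra! hz'
    have := key z (by omega) (by omega)
    rcases Finset.mem_union.mp hz with hz | hz <;>
    · have := cnt_eq_cnt_succ_add_one hz
      omega
  · intro z hz
    by_contra! hz'
    have := key z (by omega) (by omega)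
    rcases Finset.mem_union.mp hz with hz | hz <;>
    · have := cnt_eq_cnt_succ_add_one hz
      omega

lemma bm_swapPair_snd_iff {P Q Λ Λ' : Symb} {x y : ℕ} (hP : Interlaced P) (hQ : Interlaced Q)
    (hxy : x ≠ y) (hQxy : SplitsPair Q x y) (hcore : Bm P (swapPair Q x y))
    (hΛ : Λ.1 ∪ Λ.2 = P.1 ∪ P.2) (hΛ' : Λ'.1 ∪ Λ'.2 = Q.1 ∪ Q.2)
    (hΛ'I : Λ'.1 ∆ Λ'.2 = Q.1 ∆ Q.2) : Bm Λ Λ' ↔ Bm Λ (swapPair Λ' x y) := by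
  wlog hlt : x < y generalizing x y
  · rw [swapPair_comm] at hcore ⊢
    exact this hxy.symm hQxy.symm hcore (by omega)
  obtain ⟨gapP, gapQ⟩ := gap_of_bm_swapPair_snd hP hQ hQxy hcore
  rw [← hΛ] at gapP
  rw [← hΛ'] at gapQ
  have hx : x ∈ Λ'.1 ∆ Λ'.2 := hΛ'I ▸ hQxy.fst_mem
  have hy : y ∈ Λ'.1 ∆ Λ'.2 := hΛ'I ▸ hQxy.symm.fst_mem
  refine ⟨Bm.swapPair_snd hlt gapP gapQ hx hy, fun h => ?_⟩
  rw [← swapPair_fst_union_snd hx hy] at gapQ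
  rw [← swapPair_fst_symmDiff_snd Λ' x y] at hx hy
  simpa only [swapPair_swapPair] using h.swapPair_snd hlt gapP gapQ hx hy

lemma bm_swapPair_fst_iff {P Q Λ Λ' : Symb} {x y : ℕ} (hP : Interlaced P) (hQ : Interlaced Q)
    (hxy : x ≠ y) (hQxy : SplitsPair Q x y) (hcore : Bm (swapPair Q x y) P)
    (hΛ : Λ.1 ∪ Λ.2 = Q.1 ∪ Q.2) (hΛI : Λ.1 ∆ Λ.2 = Q.1 ∆ Q.2)
    (hΛ' : Λ'.1 ∪ Λ'.2 = P.1 ∪ P.2) : Bm Λ Λ' ↔ Bm (swapPair Λ x y) Λ' := by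
  wlog hlt : x < y generalizing x y
  · rw [swapPair_comm] at hcore ⊢
    exact this hxy.symm hQxy.symm hcore (by omega)
  obtain ⟨gapP, gapQ⟩ := gap_of_bm_swapPair_fst hP hQ hQxy hcore
  rw [← hΛ'] at gapP
  rw [← hΛ] at gapQ
  have hx : x ∈ Λ.1 ∆ Λ.2 := hΛI ▸ hQxy.fst_mem
  have hy : y ∈ Λ.1 ∆ Λ.2 := hΛI ▸ hQxy.symm.fst_mem
  refine ⟨Bm.swapPair_fst hlt gapQ gapP hx hy, fun h => ?_⟩
  rw [← swapPair_fst_union_snd hx hy] at gapQ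
  rw [← swapPair_fst_symmDiff_snd Λ x y] at hx hy
  simpa only [swapPair_swapPair] using h.swapPair_fst hlt gapQ gapP hx hy

section Lam

variable {Q N : Symb} {c d : ℕ}

lemma lam_fst_union_snd (hN : SubZI N Q) : (lam Q N).1 ∪ (lam Q N).2 = Q.1 ∪ Q.2 := by
  ext z
  have h1 := @hN.1 z
  have h2 := @hN.2 z
  simp only [lam, Finset.mem_union, Finset.mem_sdiff] at h1 h2 ⊢
  tauto

lemma lam_fst_symmDiff_snd (hN : SubZI N Q) : (lam Q N).1 ∆ (lam Q N).2 = Q.1 ∆ Q.2 := by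
  ext z
  have h1 := @hN.1 z
  have h2 := @hN.2 z
  simp only [lam, Finset.mem_symmDiff, Finset.mem_union, Finset.mem_sdiff] at h1 h2 ⊢
  tauto

lemma lam_symmDiff_pair (hc : c ∈ Q.1 \ Q.2) (hd : d ∈ Q.2 \ Q.1) (hN : SubZI N Q) :
    lam Q (N.1 ∆ {c}, N.2 ∆ {d}) = swapPair (lam Q N) c d := by
  have h1 := @hN.1
  have h2 := @hN.2
  rw [Finset.mem_sdiff] at hc hd
  ext z <;>
  · have := @h1 z; have := @h2 z
    by_cases hzc : z = c <;> by_cases hzd : z = d <;>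
      simp_all [lam, swapPair, Finset.mem_symmDiff]

lemma lam_singleton_pair (hc : c ∈ Q.1 \ Q.2) (hd : d ∈ Q.2 \ Q.1) :
    lam Q ({c}, {d}) = swapPair Q c d := by
  rw [Finset.mem_sdiff] at hc hd
  ext z <;> by_cases z = c <;> by_cases z = d <;> simp_all [lam, swapPair, Finset.mem_symmDiff]

lemma subZI_symmDiff (hc : c ∈ Q.1 \ Q.2) (hd : d ∈ Q.2 \ Q.1) (hN : SubZI N Q) :
    SubZI (N.1 ∆ {c}, N.2 ∆ {d}) Q :=
  ⟨Finset.symmDiff_subset_union.trans (Finset.union_subset hN.1 (by simpa using hc)),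
    Finset.symmDiff_subset_union.trans (Finset.union_subset hN.2 (by simpa using hd))⟩

end Lam

section Core

variable {P Q : Symb} {c d : ℕ}

lemma ne_of_mem_sdiff (hc : c ∈ Q.1 \ Q.2) (hd : d ∈ Q.2 \ Q.1) : c ≠ d := by
  rintro rfl
  exact (Finset.mem_sdiff.mp hc).2 (Finset.mem_sdiff.mp hd).1

lemma bm_lam_symmDiff_snd_iff (hP : Interlaced P) (hQ : Interlaced Q) (hc : c ∈ Q.1 \ Q.2)
    (hd : d ∈ Q.2 \ Q.1) (hcore : Bm P (lam Q ({c}, {d}))) {Λ N : Symb} (hΛ : Λ ∈ Sbar P)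
    (hN : SubZI N Q) : Bm Λ (lam Q N) ↔ Bm Λ (lam Q (N.1 ∆ {c}, N.2 ∆ {d})) := by
  obtain ⟨M, hM, rfl⟩ := hΛ
  rw [lam_singleton_pair hc hd] at hcore
  rw [lam_symmDiff_pair hc hd hN]
  exact bm_swapPair_snd_iff hP hQ (ne_of_mem_sdiff hc hd) (Or.inl ⟨hc, hd⟩) hcore
    (lam_fst_union_snd hM) (lam_fst_union_snd hN) (lam_fst_symmDiff_snd hN)

lemma bm_lam_symmDiff_fst_iff (hP : Interlaced P) (hQ : Interlaced Q) (hc : c ∈ Q.1 \ Q.2)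
    (hd : d ∈ Q.2 \ Q.1) (hcore : Bm (lam Q ({c}, {d})) P) {N Λ' : Symb} (hN : SubZI N Q)
    (hΛ' : Λ' ∈ Sbar P) : Bm (lam Q N) Λ' ↔ Bm (lam Q (N.1 ∆ {c}, N.2 ∆ {d})) Λ' := by
  obtain ⟨M, hM, rfl⟩ := hΛ'
  rw [lam_singleton_pair hc hd] at hcore
  rw [lam_symmDiff_pair hc hd hN]
  exact bm_swapPair_fst_iff hP hQ (ne_of_mem_sdiff hc hd) (Or.inl ⟨hc, hd⟩) hcore
    (lam_fst_union_snd hN) (lam_fst_symmDiff_snd hN) (lam_fst_union_snd hM)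

end Core

lemma bbarPlus_iff {Z Z' Λ Λ' : Symb} {m m' : ℕ} (hΛ : Λ ∈ Sbar Z) (hΛ' : Λ' ∈ Sbar Z') :
    BbarPlus Z Z' m m' Λ Λ' ↔ m' = m ∧ Bm Λ Λ' ∨ m' = m + 1 ∧ Bm Λ' Λ := by
  simp only [BbarPlus, hΛ, hΛ', bm1_iff_bm, true_and]

theorem stmt5_general (m m' : ℕ) (Z Z' : Symb)
    (hZ : IsSpecial1 Z m) (hZ' : IsSpecial0 Z' m') :
    (∀ c d : ℕ, ConsecPair Z' c d → DRel Z Z' m m' Z (lam Z' ({c}, {d})) →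
      ∀ Λ ∈ Sbar Z, ∀ N : Symb, SubZI N Z' →
        (BbarPlus Z Z' m m' Λ (lam Z' N) ↔
         BbarPlus Z Z' m m' Λ (lam Z' (N.1 ∆ {c}, N.2 ∆ {d})))) ∧
    (∀ a b : ℕ, ConsecPair Z a b → DRel Z Z' m m' (lam Z ({a}, {b})) Z' →
      ∀ M : Symb, SubZI M Z → ∀ Λ' ∈ Sbar Z',
        (BbarPlus Z Z' m m' (lam Z M) Λ' ↔
         BbarPlus Z Z' m m' (lam Z (M.1 ∆ {a}, M.2 ∆ {b})) Λ')) := by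
  have hI := hZ.interlaced
  have hI' := hZ'.interlaced
  refine ⟨fun c d ⟨hc, hd, _⟩ hcore Λ hΛ N hN => ?_, fun a b ⟨ha, hb, _⟩ hcore M hM Λ' hΛ' => ?_⟩
  · obtain ⟨⟨-, -, hcase⟩, -⟩ := hcore
    rw [bbarPlus_iff hΛ ⟨N, hN, rfl⟩, bbarPlus_iff hΛ ⟨_, subZI_symmDiff hc hd hN, rfl⟩]
    rcases hcase with ⟨rfl, hB⟩ | ⟨rfl, hB⟩
    · simpa using bm_lam_symmDiff_snd_iff hI hI' hc hd hB hΛ hN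
    · simpa using bm_lam_symmDiff_fst_iff hI hI' hc hd (bm1_iff_bm.mp hB) hN hΛ
  · obtain ⟨⟨-, -, hcase⟩, -⟩ := hcore
    rw [bbarPlus_iff ⟨M, hM, rfl⟩ hΛ', bbarPlus_iff ⟨_, subZI_symmDiff ha hb hM, rfl⟩ hΛ']
    rcases hcase with ⟨rfl, hB⟩ | ⟨rfl, hB⟩
    · simpa using bm_lam_symmDiff_fst_iff hI' hI ha hb hB hM hΛ'
    · simpa using bm_lam_symmDiff_snd_iff hI' hI ha hb (bm1_iff_bm.mp hB) hΛ' hM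

theorem stmt5 (m m' : ℕ) (Z Z' : Symb) (hm : m' = m ∨ m' = m + 1)
    (hZ : IsSpecial1 Z m) (hZ' : IsSpecial0 Z' m')
    (hD : ∃ A A' : Symb, DRel Z Z' m m' A A') :
    (∀ c d : ℕ, ConsecPair Z' c d → DRel Z Z' m m' Z (lam Z' ({c}, {d})) →
      ∀ Λ ∈ Sbar Z, ∀ N : Symb, SubZI N Z' →
        (BbarPlus Z Z' m m' Λ (lam Z' N) ↔
         BbarPlus Z Z' m m' Λ (lam Z' (N.1 ∆ {c}, N.2 ∆ {d})))) ∧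
    (∀ a b : ℕ, ConsecPair Z a b → DRel Z Z' m m' (lam Z ({a}, {b})) Z' →
      ∀ M : Symb, SubZI M Z → ∀ Λ' ∈ Sbar Z',
        (BbarPlus Z Z' m m' (lam Z M) Λ' ↔
         BbarPlus Z Z' m m' (lam Z (M.1 ∆ {a}, M.2 ∆ {b})) Λ')) :=
  stmt5_general m m' Z Z' hZ hZ'
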